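/- Let H be a Hermitian n×n complex matrix, (L_k)_{k∈ι} a finite family of n×n complex matrices, and let 𝓛 be the Lindblad generator, the continuous linear endomorphism of the n×n complex matrices given by 𝓛(X) = −i(H·X − X·H) + Σ_k ( L_k·X·L_kᴴ − (1/2)(L_kᴴ·L_k·X + X·L_kᴴ·L_k) ). Let G be a group and (U_g, ω) a projective unitary representation of G on ℂⁿ such that H · U_g = U_g · H for all g ∈ G. Suppose that for every t ≥ 0 the channel exp(t·𝓛) (the exponential taken in the Banach algebra of continuous linear endomorphisms of the n×n matrices) is strong covariant, i.e. exp(t·𝓛)(U_g · X) = U_g · exp(t·𝓛)(X) for all g ∈ G and all X. Then every jump operator commutes with the symmetry: L_k · U_g = U_g · L_k for all k ∈ ι and all g ∈ G. -/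

import Mathlib

open Matrix

attribute [local instance] Matrix.linftyOpNormedAddCommGroup Matrix.linftyOpNormedSpace
  Matrix.linftyOpNormedRing Matrix.linftyOpNormedAlgebra

instance matrixCLMIsTopologicalRing (n : ℕ) :
    IsTopologicalRing (Matrix (Fin n) (Fin n) ℂ →L[ℂ] Matrix (Fin n) (Fin n) ℂ) :=
  @NonUnitalSeminormedRing.toIsTopologicalRing (Matrix (Fin n) (Fin n) ℂ →L[ℂ] Matrix (Fin n) (Fin n) ℂ)
    (ContinuousLinearMap.toNormedRing (𝕜 := ℂ) (E := Matrix (Fin n) (Fin n) ℂ)).toNonUnitalNormedRing.toNonUnitalSeminormedRing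

set_option maxHeartbeats 1000000 in
set_option synthInstance.maxHeartbeats 400000 in
/-- **If a strong covariant quantum dynamical semigroup is generated by a GKSL generator
whose Hamiltonian commutes with the symmetry, then every jump operator commutes with the
symmetry.** -/
theorem gksl_strong_covariant_jump_commute
    {G : Type*} [Group G] {n : ℕ} {ι : Type*} [Fintype ι]
    (H : Matrix (Fin n) (Fin n) ℂ) (hH : Hᴴ = H)
    (L : ι → Matrix (Fin n) (Fin n) ℂ)
    (𝓛 : Matrix (Fin n) (Fin n) ℂ →L[ℂ] Matrix (Fin n) (Fin n) ℂ)
    (h𝓛 : ∀ X : Matrix (Fin n) (Fin n) ℂ,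
      𝓛 X = (-Complex.I) • (H * X - X * H) +
        ∑ k, (L k * X * (L k)ᴴ -
          ((1 : ℂ) / 2) • ((L k)ᴴ * L k * X + X * ((L k)ᴴ * L k))))
    (U : G → Matrix (Fin n) (Fin n) ℂ) (ω : G → G → ℂ)
    (hUunit : ∀ g, (U g)ᴴ * U g = 1)
    (hUmul : ∀ g h, U g * U h = ω g h • U (g * h))
    (hUone : U 1 = 1)
    (hHU : ∀ g : G, H * U g = U g * H)
    (hcov : ∀ t : ℝ, 0 ≤ t → ∀ (g : G) (X : Matrix (Fin n) (Fin n) ℂ),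
      NormedSpace.exp ((t : ℂ) • 𝓛) (U g * X) = U g * NormedSpace.exp ((t : ℂ) • 𝓛) X) :
    ∀ (k : ι) (g : G), L k * U g = U g * L k := by
  intro k₀ g
  set Ug := U g with hUg
  -- semigroup property
  have hcomm : ∀ s t : ℝ, Commute ((s:ℂ) • 𝓛) ((t:ℂ) • 𝓛) := by
    intro s t
    ext X
    simp only [ContinuousLinearMap.mul_apply, ContinuousLinearMap.smul_apply, _root_.map_smul,
      smul_smul]
    rw [mul_comm]
  have hmul : ∀ s t : ℝ, NormedSpace.exp ((s:ℂ) • 𝓛) * NormedSpace.exp ((t:ℂ) • 𝓛)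
      = NormedSpace.exp (((s+t:ℝ):ℂ) • 𝓛) := by
    intro s t
    refine Eq.trans (@NormedSpace.exp_add_of_commute _ ContinuousLinearMap.toNormedRing
      (NormedAlgebra.restrictScalars ℚ ℂ _) _ _ _ (hcomm s t)).symm ?_
    congr 1
    push_cast
    exact (add_smul _ _ _).symm
  have hcancel : ∀ (s t : ℝ), s + t = 0 → ∀ A : Matrix (Fin n) (Fin n) ℂ,
      NormedSpace.exp ((s:ℂ) • 𝓛) (NormedSpace.exp ((t:ℂ) • 𝓛) A) = A := by
    intro s t hst A
    have h1 : (NormedSpace.exp ((s:ℂ) • 𝓛) * NormedSpace.exp ((t:ℂ) • 𝓛)) A = A := by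
      rw [hmul, hst, show (((0:ℝ):ℂ)) • 𝓛 = 0 by rw [Complex.ofReal_zero]; exact zero_smul ℂ 𝓛,
        NormedSpace.exp_zero, ContinuousLinearMap.one_apply]
    simpa [ContinuousLinearMap.mul_apply] using h1
  -- covariance for all real times
  have hcov' : ∀ (t : ℝ) (X : Matrix (Fin n) (Fin n) ℂ),
      NormedSpace.exp ((t:ℂ) • 𝓛) (Ug * X) = Ug * NormedSpace.exp ((t:ℂ) • 𝓛) X := by
    intro t X
    rcases le_total 0 t with h | h
    · exact hcov t h g X
    · have hs : 0 ≤ -t := neg_nonneg.2 h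
      have h1 := hcov (-t) hs g (NormedSpace.exp ((t:ℂ) • 𝓛) X)
      rw [← hUg] at h1
      rw [hcancel (-t) t (by ring)] at h1
      have h2 := congrArg (⇑(NormedSpace.exp ((t:ℂ) • 𝓛))) h1
      rw [hcancel t (-t) (by ring)] at h2
      exact h2.symm
  -- derivative of the semigroup at 0
  have hD : ∀ A : Matrix (Fin n) (Fin n) ℂ,
      HasDerivAt (fun t : ℝ => NormedSpace.exp ((t:ℂ) • 𝓛) A) (𝓛 A) 0 := by
    intro A
    have h1 : HasDerivAt (fun z : ℂ => NormedSpace.exp (z • 𝓛))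
        (NormedSpace.exp (((0:ℝ):ℂ) • 𝓛) * 𝓛) ((0:ℝ):ℂ) :=
      @hasDerivAt_exp_smul_const _ _ _ ContinuousLinearMap.toNormedRing _ _ 𝓛 _
    rw [show (((0:ℝ):ℂ)) • 𝓛 = 0 by rw [Complex.ofReal_zero]; exact zero_smul ℂ 𝓛,
      NormedSpace.exp_zero, one_mul] at h1
    have h3 := (ContinuousLinearMap.apply ℂ (Matrix (Fin n) (Fin n) ℂ) A).hasFDerivAt.comp_hasDerivAt _ h1
    have h2 := ((h3.hasFDerivAt.restrictScalars ℝ).comp (0:ℝ)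
      Complex.ofRealCLM.hasFDerivAt).hasDerivAt
    simp only [Function.comp_def, ContinuousLinearMap.comp_apply, ContinuousLinearMap.coe_restrictScalars',
      Complex.ofRealCLM_apply, Complex.ofReal_one, ContinuousLinearMap.toSpanSingleton_apply, one_smul] at h2
    exact h2
  -- covariance of the generator
  have key : ∀ X : Matrix (Fin n) (Fin n) ℂ, 𝓛 (Ug * X) = Ug * 𝓛 X := by
    intro X
    have ha := hD (Ug * X)
    have hb : HasDerivAt (fun t : ℝ => Ug * NormedSpace.exp ((t:ℂ) • 𝓛) X) (Ug * 𝓛 X) 0 :=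
      (hD X).const_mul Ug
    have hfun : (fun t : ℝ => NormedSpace.exp ((t:ℂ) • 𝓛) (Ug * X))
        = fun t : ℝ => Ug * NormedSpace.exp ((t:ℂ) • 𝓛) X := funext fun t => hcov' t X
    rw [hfun] at ha
    exact ha.unique hb
  -- jump operator commutators and the C matrix
  set M : ι → Matrix (Fin n) (Fin n) ℂ := fun k => L k * Ug - Ug * L k with hM
  set C : Matrix (Fin n) (Fin n) ℂ :=
    ((1:ℂ)/2) • ∑ k, ((L k)ᴴ * L k * Ug - Ug * ((L k)ᴴ * L k)) with hC
  -- the fundamental relation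
  have hR : ∀ X : Matrix (Fin n) (Fin n) ℂ, ∑ k, M k * X * (L k)ᴴ = C * X := by
    intro X
    have e1 := key X
    rw [h𝓛 (Ug * X), h𝓛 X] at e1
    have hfirst : (-Complex.I) • (H * (Ug * X) - Ug * X * H)
        = Ug * ((-Complex.I) • (H * X - X * H)) := by
      rw [mul_smul_comm]
      congr 1
      simp only [mul_sub, ← mul_assoc]
      rw [hHU g, ← hUg]
    rw [hfirst, mul_add, Finset.mul_sum] at e1
    have e2 := add_left_cancel e1
    have e3 : ∑ k, (M k * X * (L k)ᴴ
        - ((1:ℂ)/2) • (((L k)ᴴ * L k * Ug - Ug * ((L k)ᴴ * L k)) * X)) = 0 := by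
      have e4 : ∑ k, (M k * X * (L k)ᴴ
          - ((1:ℂ)/2) • (((L k)ᴴ * L k * Ug - Ug * ((L k)ᴴ * L k)) * X))
          = ∑ k, ((L k * (Ug * X) * (L k)ᴴ -
              ((1:ℂ)/2) • ((L k)ᴴ * L k * (Ug * X) + (Ug * X) * ((L k)ᴴ * L k)))
            - Ug * (L k * X * (L k)ᴴ -
              ((1:ℂ)/2) • ((L k)ᴴ * L k * X + X * ((L k)ᴴ * L k)))) := by
        refine Finset.sum_congr rfl fun k _ => ?_
        simp only [hM, mul_sub, sub_mul, mul_add, add_mul, smul_add, smul_sub, mul_smul_comm,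
          mul_assoc]
        abel
      rw [e4, Finset.sum_sub_distrib]
      exact sub_eq_zero_of_eq e2
    rw [Finset.sum_sub_distrib, sub_eq_zero] at e3
    rw [e3, hC, smul_mul_assoc, Finset.sum_mul, Finset.smul_sum]
  -- adjoint relation
  have hR' : ∀ X : Matrix (Fin n) (Fin n) ℂ, ∑ k, L k * X * (M k)ᴴ = X * Cᴴ := by
    intro X
    have h1 := congrArg conjTranspose (hR Xᴴ)
    simpa [Matrix.conjTranspose_sum, Matrix.conjTranspose_mul,
      Matrix.conjTranspose_conjTranspose, mul_assoc] using h1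
  -- positivity relation
  have hzero : ∑ k, M k * (M k)ᴴ = 0 := by
    have hA : ∑ k, L k * Ug * (M k)ᴴ = Ug * Cᴴ := by
      have := hR' Ug
      simpa [mul_assoc] using this
    have hB : ∑ k, L k * (M k)ᴴ = Cᴴ := by
      have := hR' 1
      simpa using this
    calc ∑ k, M k * (M k)ᴴ
        = ∑ k, (L k * Ug * (M k)ᴴ - Ug * (L k * (M k)ᴴ)) := by
          refine Finset.sum_congr rfl fun k _ => ?_
          simp only [hM, sub_mul, mul_assoc]
      _ = (∑ k, L k * Ug * (M k)ᴴ) - Ug * ∑ k, L k * (M k)ᴴ := by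
          rw [Finset.sum_sub_distrib, Finset.mul_sum]
      _ = Ug * Cᴴ - Ug * Cᴴ := by rw [hA, hB]
      _ = 0 := sub_self _
  -- entrywise vanishing
  have hent : ∀ (k : ι) (i j : Fin n), M k i j = 0 := by
    intro k i j
    have h0 := congrFun (congrFun hzero i) i
    simp only [Matrix.sum_apply, Matrix.mul_apply, Matrix.conjTranspose_apply,
      Matrix.zero_apply] at h0
    have h1 : ∑ k, ∑ j' : Fin n, (Complex.normSq (M k i j') : ℂ) = 0 := by
      simpa [Complex.star_def, Complex.mul_conj] using h0
    have h2 : ∑ k, ∑ j' : Fin n, Complex.normSq (M k i j') = 0 := by exact_mod_cast h1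
    have h3 := (Finset.sum_eq_zero_iff_of_nonneg
      (fun k _ => Finset.sum_nonneg fun j' _ => Complex.normSq_nonneg _)).mp h2 k
      (Finset.mem_univ k)
    have h4 := (Finset.sum_eq_zero_iff_of_nonneg
      (fun j' _ => Complex.normSq_nonneg _)).mp h3 j (Finset.mem_univ j)
    exact Complex.normSq_eq_zero.mp h4
  have hMk : M k₀ = 0 := by
    ext i j
    exact hent k₀ i j
  simp only [hM] at hMk
  exact sub_eq_zero.mp hMk
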